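/- Boundedness of the restriction map from the Hardy space to the weighted L² space (Fejér–Riesz type inequality): if g : ℂ → ℂ is holomorphic on ℂ₊ = {z : Re z > 0} and M ≥ 0 satisfies ∫_ℝ |g(x+iy)|² dy ≤ M for every x > 0, then the restriction of g to the positive real axis satisfies ∫₀^∞ |g(x)|² e^{-x} dx ≤ M/2. In particular the restriction map i : g ↦ g|_{(0,∞)} is bounded from H²(ℂ₊) to L²((0,∞), e^{-x}dx). -/

import Mathlib

open MeasureTheory Real Complex Set

/-!
The function `F z = g z * conj (g (conj z)) * exp (-z)` is holomorphic on the right half-plane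
and equals `‖g x‖² e^{-x}` on the positive axis. Cauchy's theorem on the rectangles
`[ε, A] × [0, B]`, with `B → ∞`, gives `∫_ε^A F = i ∫_0^∞ F(ε + iy) dy - i ∫_0^∞ F(A + iy) dy`:
the top-edge integrals converge and, `F` being integrable on the half-strip, are integrable in
`B`, so their limit is `0`. By AM-GM,
`|F(c + iy)| ≤ e^{-c} (|g(c + iy)|² + |g(c - iy)|²) / 2`, so each vertical integral is at most
`e^{-c} M / 2`. Letting `ε → 0` and `A → ∞` gives the bound `M / 2`.
-/

open scoped ComplexConjugate ENNReal Interval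
open Filter Topology

theorem Filter.Tendsto.eq_zero_of_lintegral_enorm_Ioi_ne_top {E : Type*} [NormedAddCommGroup E]
    {Φ : ℝ → E} {L : E} {a : ℝ} (hΦ : Tendsto Φ atTop (𝓝 L))
    (hfin : ∫⁻ t in Ioi a, ‖Φ t‖ₑ ≠ ∞) : L = 0 := by
  by_contra hL
  have hδ : (0 : ℝ≥0∞) < ‖L‖ₑ / 2 := by simpa [pos_iff_ne_zero] using hL
  obtain ⟨N, hN⟩ := eventually_atTop.1 <| hΦ.enorm.eventually <|
    lt_mem_nhds (ENNReal.half_lt_self (by simpa using hL) enorm_ne_top)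
  refine hfin (eq_top_iff.2 ?_)
  calc ∞ = ∫⁻ _ in Ioi (max a N), ‖L‖ₑ / 2 := by
        rw [setLIntegral_const, Real.volume_Ioi, ENNReal.mul_top hδ.ne']
    _ ≤ ∫⁻ t in Ioi (max a N), ‖Φ t‖ₑ :=
        setLIntegral_mono' measurableSet_Ioi fun t ht => (hN t (max_lt_iff.1 ht).2.le).le
    _ ≤ ∫⁻ t in Ioi a, ‖Φ t‖ₑ := lintegral_mono_set (Ioi_subset_Ioi (le_max_left a N))

theorem integral_boundary_halfStrip_eq_zero {E : Type*} [NormedAddCommGroup E]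
    [NormedSpace ℂ E] {f : ℂ → E} {a b : ℝ}
    (hf : DifferentiableOn ℂ f ([[a, b]] ×ℂ Ici 0))
    (ha : IntegrableOn (fun y : ℝ => f (a + y * I)) (Ioi 0))
    (hb : IntegrableOn (fun y : ℝ => f (b + y * I)) (Ioi 0))
    (hstrip : ∫⁻ x in Ι a b, ∫⁻ y in Ioi (0 : ℝ), ‖f (x + y * I)‖ₑ ≠ ∞) :
    (∫ x in a..b, f x) + I • (∫ y in Ioi (0 : ℝ), f (b + y * I))
      - I • (∫ y in Ioi (0 : ℝ), f (a + y * I)) = 0 := by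
  set T : ℝ → E := fun B => ∫ x in a..b, f (x + B * I)
  have hrect : ∀ B, 0 ≤ B → T B = (∫ x in a..b, f x) + I • (∫ y in (0)..B, f (b + y * I))
      - I • (∫ y in (0)..B, f (a + y * I)) := by
    intro B hB
    have := integral_boundary_rect_eq_zero_of_differentiableOn f a (b + B * I) <| hf.mono <| by
      simp only [ofReal_re, add_re, ofReal_im, mul_re, I_re, mul_zero, I_im, mul_one, sub_self,
        add_zero, add_im, mul_im, zero_add, uIcc_of_le hB]
      exact reProdIm_subset_iff'.2 (Or.inl ⟨subset_rfl, Icc_subset_Ici_self⟩)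
    simp only [ofReal_re, add_re, ofReal_im, mul_re, I_re, mul_zero, I_im, mul_one, sub_self,
      add_zero, zero_mul, add_im, mul_im, zero_add, ofReal_zero] at this
    linear_combination (norm := module) -this
  have hT : Tendsto T atTop (𝓝 ((∫ x in a..b, f x) + I • (∫ y in Ioi (0 : ℝ), f (b + y * I))
      - I • (∫ y in Ioi (0 : ℝ), f (a + y * I)))) := by
    refine Tendsto.congr' (eventually_atTop.2 ⟨0, fun B hB => (hrect B hB).symm⟩) ?_
    exact (tendsto_const_nhds.add
      ((intervalIntegral_tendsto_integral_Ioi 0 hb tendsto_id).const_smul I)).sub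
      ((intervalIntegral_tendsto_integral_Ioi 0 ha tendsto_id).const_smul I)
  refine hT.eq_zero_of_lintegral_enorm_Ioi_ne_top (a := 0) (ne_top_of_le_ne_top hstrip ?_)
  have hcont : ContinuousOn (fun p : ℝ × ℝ => ‖f (p.1 + p.2 * I)‖ₑ) (Ι a b ×ˢ Ioi 0) := by
    refine continuous_enorm.comp_continuousOn (hf.continuousOn.comp (by fun_prop) ?_)
    rintro ⟨x, y⟩ ⟨hx, hy⟩
    simp [mem_reProdIm, uIoc_subset_uIcc hx, le_of_lt (show 0 < y from hy)]
  calc ∫⁻ B in Ioi (0 : ℝ), ‖T B‖ₑ ≤ ∫⁻ B in Ioi (0 : ℝ), ∫⁻ x in Ι a b, ‖f (x + B * I)‖ₑ := by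
        refine lintegral_mono fun B => ?_
        rw [← ofReal_norm, intervalIntegral.norm_integral_eq_norm_integral_uIoc, ofReal_norm]
        exact enorm_integral_le_lintegral_enorm _
    _ = ∫⁻ x in Ι a b, ∫⁻ y in Ioi (0 : ℝ), ‖f (x + y * I)‖ₑ := by
        refine (lintegral_lintegral_swap ?_).symm
        rw [Measure.prod_restrict]
        exact hcont.aemeasurable (measurableSet_uIoc.prod measurableSet_Ioi)

lemma lintegral_Ioi_add_comp_neg_le {u : ℝ → ℝ≥0∞} (hu : Measurable u) :
    ∫⁻ y in Ioi (0 : ℝ), (u y + u (-y)) ≤ ∫⁻ y, u y := by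
  have hneg : ∫⁻ y in Ioi (0 : ℝ), u (-y) = ∫⁻ y in Iio (0 : ℝ), u y := by
    simpa using (Measure.measurePreserving_neg (volume : Measure ℝ)).setLIntegral_comp_preimage
      (s := Iio 0) measurableSet_Iio hu
  rw [lintegral_add_left hu, hneg,
    ← lintegral_union measurableSet_Iio (Ioi_disjoint_Iio_same (a := (0 : ℝ)))]
  exact setLIntegral_le_lintegral _ _

lemma ContinuousOn.continuous_comp_vertical {E : Type*} [TopologicalSpace E] {f : ℂ → E}
    (hf : ContinuousOn f {z : ℂ | 0 < z.re}) {c : ℝ} (hc : 0 < c) :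
    Continuous fun y : ℝ => f (c + y * I) :=
  hf.comp_continuous (by fun_prop) fun y => by simpa using hc

noncomputable def hardyIntegrand (g : ℂ → ℂ) (z : ℂ) : ℂ :=
  g z * conj (g (conj z)) * cexp (-z)

lemma differentiableOn_hardyIntegrand {g : ℂ → ℂ}
    (hg : DifferentiableOn ℂ g {z : ℂ | 0 < z.re}) :
    DifferentiableOn ℂ (hardyIntegrand g) {z : ℂ | 0 < z.re} := by
  have hopen : IsOpen {z : ℂ | 0 < z.re} := isOpen_lt continuous_const continuous_re
  intro z hz
  have hconj : DifferentiableAt ℂ (fun w => conj (g (conj w))) z := by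
    have := (hg.differentiableAt (hopen.mem_nhds (show 0 < (conj z).re by simpa using hz)))
      |>.conj_conj
    rwa [conj_conj] at this
  exact ((hg.differentiableAt (hopen.mem_nhds hz)).mul hconj).mul
    (Complex.differentiable_exp.comp differentiable_neg).differentiableAt
    |>.differentiableWithinAt

lemma hardyIntegrand_ofReal (g : ℂ → ℂ) (x : ℝ) :
    hardyIntegrand g x = ((‖g x‖ ^ 2 * Real.exp (-x) : ℝ) : ℂ) := by
  rw [hardyIntegrand, conj_ofReal, mul_conj, normSq_eq_norm_sq]
  push_cast
  ring

lemma norm_hardyIntegrand (g : ℂ → ℂ) (z : ℂ) :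
    ‖hardyIntegrand g z‖ = ‖g z‖ * ‖g (conj z)‖ * Real.exp (-z.re) := by
  simp [hardyIntegrand, Complex.norm_exp]

lemma lintegral_enorm_hardyIntegrand_Ioi_le {g : ℂ → ℂ}
    (hg : DifferentiableOn ℂ g {z : ℂ | 0 < z.re}) {c M : ℝ} (hc : 0 < c)
    (hbound : ∫⁻ y : ℝ, ENNReal.ofReal (‖g (c + y * I)‖ ^ 2) ≤ ENNReal.ofReal M) :
    ∫⁻ y in Ioi (0 : ℝ), ‖hardyIntegrand g (c + y * I)‖ₑ ≤
      ENNReal.ofReal (Real.exp (-c)) * ENNReal.ofReal (M / 2) := by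
  set u : ℝ → ℝ≥0∞ := fun y => ENNReal.ofReal (‖g (c + y * I)‖ ^ 2)
  have hu : Measurable u :=
    ((hg.continuousOn.continuous_comp_vertical hc).norm.pow 2).measurable.ennreal_ofReal
  have hpoint : ∀ y : ℝ, ‖hardyIntegrand g (c + y * I)‖ₑ ≤
      ENNReal.ofReal (Real.exp (-c) / 2) * (u y + u (-y)) := by
    intro y
    have hconj : conj ((c : ℂ) + y * I) = c + (-y : ℝ) * I := by simp
    rw [← ENNReal.ofReal_add (by positivity) (by positivity), ← ENNReal.ofReal_mul (by positivity),
      ← ofReal_norm, norm_hardyIntegrand, hconj]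
    refine ENNReal.ofReal_le_ofReal ?_
    have := two_mul_le_add_sq ‖g (c + y * I)‖ ‖g (c + (-y : ℝ) * I)‖
    simp only [add_re, ofReal_re, mul_re, I_re, mul_zero, ofReal_im, I_im, mul_one, sub_self,
      add_zero]
    nlinarith [Real.exp_pos (-c)]
  calc ∫⁻ y in Ioi (0 : ℝ), ‖hardyIntegrand g (c + y * I)‖ₑ
      ≤ ∫⁻ y in Ioi (0 : ℝ), ENNReal.ofReal (Real.exp (-c) / 2) * (u y + u (-y)) :=
        lintegral_mono hpoint
    _ = ENNReal.ofReal (Real.exp (-c) / 2) * ∫⁻ y in Ioi (0 : ℝ), (u y + u (-y)) :=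
        lintegral_const_mul' _ _ ENNReal.ofReal_ne_top
    _ ≤ ENNReal.ofReal (Real.exp (-c) / 2) * ENNReal.ofReal M := by
        gcongr
        exact (lintegral_Ioi_add_comp_neg_le hu).trans hbound
    _ = ENNReal.ofReal (Real.exp (-c)) * ENNReal.ofReal (M / 2) := by
        rw [← ENNReal.ofReal_mul (by positivity), ← ENNReal.ofReal_mul (by positivity)]
        ring_nf

lemma continuousOn_sq_norm_mul_exp_neg {g : ℂ → ℂ}
    (hg : DifferentiableOn ℂ g {z : ℂ | 0 < z.re}) :
    ContinuousOn (fun x : ℝ => ‖g x‖ ^ 2 * Real.exp (-x)) (Ioi 0) := by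
  refine ((hg.continuousOn.comp continuous_ofReal.continuousOn fun x hx => ?_).norm.pow 2).mul
    (by fun_prop)
  simpa using hx

lemma lintegral_Ioc_sq_norm_mul_exp_le {g : ℂ → ℂ}
    (hg : DifferentiableOn ℂ g {z : ℂ | 0 < z.re})
    {M : ℝ} (hbound : ∀ x : ℝ, 0 < x →
      ∫⁻ y : ℝ, ENNReal.ofReal (‖g (x + y * I)‖ ^ 2) ≤ ENNReal.ofReal M)
    {ε A : ℝ} (hε : 0 < ε) (hεA : ε ≤ A) :
    ∫⁻ x in Ioc ε A, ENNReal.ofReal (‖g x‖ ^ 2 * Real.exp (-x)) ≤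
      (ENNReal.ofReal (Real.exp (-ε)) + ENNReal.ofReal (Real.exp (-A))) *
        ENNReal.ofReal (M / 2) := by
  set F := hardyIntegrand g
  set P : ℝ → ℂ := fun c => ∫ y in Ioi (0 : ℝ), F (c + y * I)
  have hF := differentiableOn_hardyIntegrand hg
  have hline : ∀ c : ℝ, 0 < c → ∫⁻ y in Ioi (0 : ℝ), ‖F (c + y * I)‖ₑ ≤
      ENNReal.ofReal (Real.exp (-c)) * ENNReal.ofReal (M / 2) :=
    fun c hc => lintegral_enorm_hardyIntegrand_Ioi_le hg hc (hbound c hc)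
  have hint : ∀ c : ℝ, 0 < c → IntegrableOn (fun y : ℝ => F (c + y * I)) (Ioi 0) := fun c hc =>
    ⟨(hF.continuousOn.continuous_comp_vertical hc).aestronglyMeasurable,
      (hline c hc).trans_lt (ENNReal.mul_lt_top ENNReal.ofReal_lt_top ENNReal.ofReal_lt_top)⟩
  have hstrip : ∫⁻ x in Ι ε A, ∫⁻ y in Ioi (0 : ℝ), ‖F (x + y * I)‖ₑ ≠ ∞ := by
    refine ne_top_of_le_ne_top (b := ∫⁻ _ in Ι ε A, ENNReal.ofReal (M / 2)) ?_ ?_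
    · simp [uIoc_of_le hεA, lintegral_const, ENNReal.mul_eq_top]
    rw [uIoc_of_le hεA]
    refine setLIntegral_mono' measurableSet_Ioc fun x hx => (hline x (hε.trans hx.1)).trans ?_
    exact mul_le_of_le_one_left zero_le
      (ENNReal.ofReal_le_one.2 (Real.exp_le_one_iff.2 (by linarith [hx.1])))
  have hcauchy : ∫ x in ε..A, F x = I • P ε - I • P A := by
    have := integral_boundary_halfStrip_eq_zero (hF.mono fun z hz => ?_) (hint ε hε)
      (hint A (hε.trans_le hεA)) hstrip
    · linear_combination (norm := module) this
    rw [mem_reProdIm, uIcc_of_le hεA] at hz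
    exact hε.trans_le hz.1.1
  have hreal : ∫ x in ε..A, F x = ((∫ x in ε..A, ‖g x‖ ^ 2 * Real.exp (-x) : ℝ) : ℂ) := by
    rw [← intervalIntegral.integral_ofReal]
    exact intervalIntegral.integral_congr fun x _ => hardyIntegrand_ofReal g x
  have hintR : IntegrableOn (fun x : ℝ => ‖g x‖ ^ 2 * Real.exp (-x)) (Ioc ε A) := by
    refine (ContinuousOn.integrableOn_Icc ?_).mono_set Ioc_subset_Icc_self
    exact (continuousOn_sq_norm_mul_exp_neg hg).mono fun x hx => hε.trans_le hx.1
  calc ∫⁻ x in Ioc ε A, ENNReal.ofReal (‖g x‖ ^ 2 * Real.exp (-x))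
      = ENNReal.ofReal (∫ x in ε..A, ‖g x‖ ^ 2 * Real.exp (-x)) := by
        rw [intervalIntegral.integral_of_le hεA,
          ofReal_integral_eq_lintegral_ofReal hintR (ae_of_all _ fun x => by positivity)]
    _ = ‖∫ x in ε..A, F x‖ₑ := by
        rw [hreal, ← ofReal_norm, norm_real, Real.norm_of_nonneg
          (intervalIntegral.integral_nonneg hεA fun x _ => by positivity)]
    _ ≤ ‖P ε‖ₑ + ‖P A‖ₑ := by
        rw [hcauchy]
        refine enorm_sub_le.trans_eq ?_
        simp [← ofReal_norm]
    _ ≤ (ENNReal.ofReal (Real.exp (-ε)) + ENNReal.ofReal (Real.exp (-A))) *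
          ENNReal.ofReal (M / 2) := by
        rw [add_mul]
        exact add_le_add ((enorm_integral_le_lintegral_enorm _).trans (hline ε hε))
          ((enorm_integral_le_lintegral_enorm _).trans (hline A (hε.trans_le hεA)))

theorem hardy_restriction_bounded_general (g : ℂ → ℂ)
    (hg : DifferentiableOn ℂ g {z : ℂ | 0 < z.re}) (M : ℝ)
    (hbound : ∀ x : ℝ, 0 < x →
      (∫⁻ y : ℝ, ENNReal.ofReal (‖g (x + y * Complex.I)‖ ^ 2)) ≤
        ENNReal.ofReal M) :
    (∫⁻ x in Ioi (0 : ℝ), ENNReal.ofReal (‖g x‖ ^ 2 * Real.exp (-x))) ≤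
      ENNReal.ofReal (M / 2) := by
  set ε : ℕ → ℝ := fun n => 1 / (n + 1)
  set A : ℕ → ℝ := fun n => n + 1
  have hε : Tendsto ε atTop (𝓝 0) := tendsto_one_div_add_atTop_nhds_zero_nat
  have hA : Tendsto A atTop atTop := tendsto_atTop_add_const_right _ 1 tendsto_natCast_atTop_atTop
  have hcover : AECover (volume.restrict (Ioi 0)) atTop fun n => Ioc (ε n) (A n) :=
    (aecover_Ioi_of_Ioi hε).inter (aecover_Iic hA)
  have hmeas : AEMeasurable (fun x : ℝ => ENNReal.ofReal (‖g x‖ ^ 2 * Real.exp (-x)))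
      (volume.restrict (Ioi 0)) :=
    ((continuousOn_sq_norm_mul_exp_neg hg).aemeasurable measurableSet_Ioi).ennreal_ofReal
  have hlim : Tendsto (fun n => (ENNReal.ofReal (Real.exp (-ε n)) +
      ENNReal.ofReal (Real.exp (-A n))) * ENNReal.ofReal (M / 2))
      atTop (𝓝 (ENNReal.ofReal (M / 2))) := by
    have h1 : Tendsto (fun n => ENNReal.ofReal (Real.exp (-ε n))) atTop (𝓝 1) := by
      simpa [Function.comp_def] using
        (ENNReal.tendsto_ofReal ((Real.continuous_exp.comp continuous_neg).tendsto 0)).comp hε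
    have h2 : Tendsto (fun n => ENNReal.ofReal (Real.exp (-A n))) atTop (𝓝 0) := by
      simpa using ENNReal.tendsto_ofReal (tendsto_exp_neg_atTop_nhds_zero.comp hA)
    simpa using ENNReal.Tendsto.mul_const (h1.add h2) (Or.inr ENNReal.ofReal_ne_top)
  refine le_of_tendsto_of_tendsto' (hcover.lintegral_tendsto_of_nat hmeas) hlim fun n => ?_
  rw [Measure.restrict_restrict measurableSet_Ioc]
  refine (lintegral_mono_set inter_subset_left).trans
    (lintegral_Ioc_sq_norm_mul_exp_le hg hbound (by positivity) ?_)
  simp only [ε, A]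
  rw [div_le_iff₀ (by positivity)]
  nlinarith [n.cast_nonneg (α := ℝ)]

/-- Boundedness of the restriction map from the Hardy space `H²(ℂ₊)` to the weighted space
`L²((0,∞), e^{-x}dx)` (Fejér–Riesz type inequality): if `g` is holomorphic on
`ℂ₊ = {z : Re z > 0}` and `M ≥ 0` satisfies `∫_ℝ |g(x+iy)|² dy ≤ M` for every `x > 0`, then
`∫₀^∞ |g(x)|² e^{-x} dx ≤ M/2`. -/
theorem hardy_restriction_bounded (g : ℂ → ℂ)
    (hg : DifferentiableOn ℂ g {z : ℂ | 0 < z.re}) (M : ℝ) (hM : 0 ≤ M)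
    (hmeas : ∀ x : ℝ, 0 < x → Measurable fun y : ℝ => g (x + y * Complex.I))
    (hbound : ∀ x : ℝ, 0 < x →
      (∫⁻ y : ℝ, ENNReal.ofReal (‖g (x + y * Complex.I)‖ ^ 2)) ≤
        ENNReal.ofReal M) :
    (∫⁻ x in Ioi (0 : ℝ), ENNReal.ofReal (‖g x‖ ^ 2 * Real.exp (-x))) ≤
      ENNReal.ofReal (M / 2) :=
  hardy_restriction_bounded_general g hg M hbound
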